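/- The circulant graphs G_{{2,5}} and G_{{1,3}} each embed as subgraphs into the complement P̄ of the Petersen graph: G_{{2,5}} ↪ P̄ and G_{{1,3}} ↪ P̄. Moreover, the Petersen graph embeds as a subgraph into its own complement: P ↪ P̄. -/

import Mathlib

open SimpleGraph

/-- The circulant graph `G_D` on `ZMod 10`: distinct `i, j` are adjacent iff
`i - j ∈ D` or `j - i ∈ D`. -/
def circ (D : Set (ZMod 10)) : SimpleGraph (ZMod 10) :=
  SimpleGraph.fromRel (fun i j => i - j ∈ D)

/-- The Petersen graph: vertices are the 2-element subsets of a 5-element set,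
adjacent iff disjoint. -/
def petersen : SimpleGraph {s : Finset (Fin 5) // s.card = 2} where
  Adj a b := Disjoint a.1 b.1
  symm := ⟨fun a b h => h.symm⟩
  loopless := ⟨fun a h => by
    have h0 : a.1 = ∅ := by simpa using disjoint_self.mp h
    have h2 := a.2
    rw [h0] at h2
    simp at h2⟩

/-!
`P̄` is the line graph of `K₅`. Its vertices are the pentagon chords `{a, a + 1}` and the
pentagram chords `{a, a + 2}` of `ZMod 5`, and the pentagon chord `{a, a + 1}` meets every
pentagram chord except `{a + 2, a + 4}`. As `G_{1,3}` joins `i` and `j` exactly when `i - j` is odd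
and different from `5`, sending `2n` to `{n, n + 1}` and `2n + 1` to `{n, n + 2}` embeds it.
Exchanging `{a, a + 1}` with `{a, a + 2}` sends the edges `{a, a + 1} — {a + 2, a + 3}`,
`{a, a + 2} — {a + 1, a + 3}` and `{a, a + 1} — {a + 2, a + 4}` of `P` to pairs of intersecting
pairs, which embeds `P` into `P̄`.
-/

def circHom {W : Type*} {H : SimpleGraph W} {D : Set (ZMod 10)} (f : ZMod 10 → W)
    (hf : ∀ d ∈ D, ∀ i, H.Adj (f (i + d)) (f i)) : circ D →g H where
  toFun := f
  map_rel' := by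
    rintro i j ⟨-, hij | hji⟩
    · simpa using hf _ hij j
    · simpa using (hf _ hji i).symm

abbrev PetersenVertex := {s : Finset (Fin 5) // s.card = 2}

instance : DecidableRel petersen.Adj := fun a b =>
  inferInstanceAs (Decidable (Disjoint a.1 b.1))

def pair (a b : Fin 5) (h : a ≠ b := by decide) : PetersenVertex :=
  ⟨{a, b}, Finset.card_pair h⟩

def chord (a : Fin 5) (long : Bool) : PetersenVertex :=
  pair a (a + if long then 2 else 1) (by cases long <;> simp)

theorem chord_bijective : Function.Bijective (Function.uncurry chord) := by
  decide

noncomputable def chordEquiv : Fin 5 × Bool ≃ PetersenVertex :=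
  Equiv.ofBijective _ chord_bijective

noncomputable def swapChords : Equiv.Perm PetersenVertex :=
  chordEquiv.permCongr ((Equiv.refl _).prodCongr Equiv.boolNot)

theorem swapChords_chord (a : Fin 5) (long : Bool) :
    swapChords (chord a long) = chord a !long := by
  change swapChords (chordEquiv (a, long)) = chordEquiv (a, !long)
  simp [swapChords, Equiv.permCongr_apply]

theorem petersen_adj_chord_imp_compl_adj :
    ∀ x y : Fin 5 × Bool, petersen.Adj (chord x.1 x.2) (chord y.1 y.2) →
      petersenᶜ.Adj (chord x.1 !x.2) (chord y.1 !y.2) := by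
  decide

noncomputable def petersenHomCompl : petersen →g petersenᶜ where
  toFun := swapChords
  map_rel' := by
    intro s t
    obtain ⟨⟨a, l⟩, rfl⟩ := chordEquiv.surjective s
    obtain ⟨⟨b, m⟩, rfl⟩ := chordEquiv.surjective t
    simpa only [chordEquiv, Equiv.ofBijective_apply, Function.uncurry_apply_pair,
      swapChords_chord] using petersen_adj_chord_imp_compl_adj (a, l) (b, m)

def circOneThreeMap (i : ZMod 10) : PetersenVertex :=
  chord (Fin.ofNat 5 (i.val / 2)) (i.val % 2 == 1)

theorem circOneThreeMap_injective : Function.Injective circOneThreeMap := by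
  decide

def circOneThreeHom : circ {1, 3} →g petersenᶜ :=
  circHom circOneThreeMap (by
    simp only [Set.forall_mem_insert, Set.mem_singleton_iff, forall_eq]
    decide)

-- `G_{2,5}` is the pentagonal prism: its odd 5-cycle goes to the pairs through `2` and `{1, 3}`,
-- its even 5-cycle to the remaining five pairs.
def circTwoFiveMap : ZMod 10 → PetersenVertex :=
  ![pair 0 1, pair 0 2, pair 0 3, pair 1 2, pair 3 4, pair 1 3, pair 0 4, pair 2 3, pair 1 4,
    pair 2 4]

theorem circTwoFiveMap_injective : Function.Injective circTwoFiveMap := by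
  decide

def circTwoFiveHom : circ {2, 5} →g petersenᶜ :=
  circHom circTwoFiveMap (by
    simp only [Set.forall_mem_insert, Set.mem_singleton_iff, forall_eq]
    decide)

/-- Subgraph embeddings: `G_{{2,5}} ↪ P̄`, `G_{{1,3}} ↪ P̄`, and `P ↪ P̄`. -/
theorem stmt_18 :
    (∃ f : circ {2, 5} →g petersenᶜ, Function.Injective f) ∧
    (∃ f : circ {1, 3} →g petersenᶜ, Function.Injective f) ∧
    (∃ f : petersen →g petersenᶜ, Function.Injective f) :=
  ⟨⟨circTwoFiveHom, circTwoFiveMap_injective⟩,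
    ⟨circOneThreeHom, circOneThreeMap_injective⟩,
    ⟨petersenHomCompl, swapChords.injective⟩⟩
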